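/- If X ∈ ℝ⁸ with X ≠ 0, then the twistor vectors X_0, …, X_7 form an orthogonal basis of ℝ⁸, and the elements ι(X_0), …, ι(X_7) generate Cl₈ as an ℝ-algebra (the subalgebra of Cl₈ generated by {ι(X_i) : i = 0,…,7} is all of Cl₈). -/

import Mathlib

noncomputable section

open scoped Quaternion TensorProduct

/-- The octonions, realized as the Cayley–Dickson double of the quaternions. -/
def Oct : Type := ℍ × ℍ

namespace Oct

instance : AddCommGroup Oct := inferInstanceAs (AddCommGroup (ℍ × ℍ))
instance : Module ℝ Oct := inferInstanceAs (Module ℝ (ℍ × ℍ))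

/-- First (quaternionic) component. -/
def x (p : Oct) : ℍ := Prod.fst p
/-- Second (quaternionic) component. -/
def y (p : Oct) : ℍ := Prod.snd p
/-- Build an octonion from two quaternions. -/
def mk (a b : ℍ) : Oct := ((a, b) : ℍ × ℍ)

@[simp] lemma x_mk (a b : ℍ) : (mk a b).x = a := rfl
@[simp] lemma y_mk (a b : ℍ) : (mk a b).y = b := rfl
@[simp] lemma x_add (p q : Oct) : (p + q).x = p.x + q.x := rfl
@[simp] lemma y_add (p q : Oct) : (p + q).y = p.y + q.y := rfl
@[simp] lemma x_smul (r : ℝ) (p : Oct) : (r • p).x = r • p.x := rfl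
@[simp] lemma y_smul (r : ℝ) (p : Oct) : (r • p).y = r • p.y := rfl
@[simp] lemma x_zero : (0 : Oct).x = 0 := rfl
@[simp] lemma y_zero : (0 : Oct).y = 0 := rfl

@[ext] lemma ext {p q : Oct} (h1 : p.x = q.x) (h2 : p.y = q.y) : p = q :=
  Prod.ext h1 h2

/-- Cayley–Dickson multiplication: `(a,b)·(c,d) = (a·c − conj(d)·b, d·a + b·conj(c))`. -/
instance : Mul Oct :=
  ⟨fun p q => mk (p.x * q.x - star q.y * p.y) (q.y * p.x + p.y * star q.x)⟩

instance : One Oct := ⟨mk 1 0⟩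

@[simp] lemma x_mul (p q : Oct) : (p * q).x = p.x * q.x - star q.y * p.y := rfl
@[simp] lemma y_mul (p q : Oct) : (p * q).y = q.y * p.x + p.y * star q.x := rfl
@[simp] lemma x_one : (1 : Oct).x = 1 := rfl
@[simp] lemma y_one : (1 : Oct).y = 0 := rfl

instance : NonUnitalNonAssocRing Oct :=
  { (inferInstance : AddCommGroup Oct) with
    mul := (· * ·)
    left_distrib := by
      intro p q r
      refine ext ?_ ?_ <;>
        simp only [x_mul, y_mul, x_add, y_add, star_add] <;> noncomm_ring
    right_distrib := by
      intro p q r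
      refine ext ?_ ?_ <;>
        simp only [x_mul, y_mul, x_add, y_add, star_add] <;> noncomm_ring
    zero_mul := by
      intro p
      refine ext ?_ ?_ <;> simp only [x_mul, y_mul, x_zero, y_zero, star_zero] <;> simp
    mul_zero := by
      intro p
      refine ext ?_ ?_ <;> simp only [x_mul, y_mul, x_zero, y_zero, star_zero] <;> simp }

instance : SMulCommClass ℝ Oct Oct where
  smul_comm r p q := by
    show r • (p * q) = p * (r • q)
    refine ext ?_ ?_ <;>
      simp [x_mul, y_mul, smul_sub, smul_add, mul_smul_comm, smul_mul_assoc,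
        star_smul, star_trivial]

instance : IsScalarTower ℝ Oct Oct where
  smul_assoc r p q := by
    show (r • p) * q = r • (p * q)
    refine ext ?_ ?_ <;>
      simp [x_mul, y_mul, smul_sub, smul_add, mul_smul_comm, smul_mul_assoc,
        star_smul, star_trivial]

/-- Octonionic conjugation: `conj (a,b) = (conj a, −b)`. -/
def conj (p : Oct) : Oct := mk (star p.x) (-p.y)

/-- The real part of an octonion. -/
def re (p : Oct) : ℝ := p.x.re

/-- The standard basis `e_0, …, e_7` of the octonions. -/
def e : Fin 8 → Oct :=
  ![mk 1 0, mk ⟨0, 1, 0, 0⟩ 0, mk ⟨0, 0, 1, 0⟩ 0, mk ⟨0, 0, 0, 1⟩ 0,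
    mk 0 1, mk 0 ⟨0, 1, 0, 0⟩, mk 0 ⟨0, 0, 1, 0⟩, mk 0 ⟨0, 0, 0, 1⟩]

/-- The real coordinates of an octonion with respect to the standard basis. -/
def coord : Fin 8 → Oct → ℝ :=
  ![fun p => p.x.re, fun p => p.x.imI, fun p => p.x.imJ, fun p => p.x.imK,
    fun p => p.y.re, fun p => p.y.imI, fun p => p.y.imJ, fun p => p.y.imK]

lemma coord_add (j : Fin 8) (p q : Oct) :
    coord j (p + q) = coord j p + coord j q := by fin_cases j <;> rfl

lemma coord_smul (j : Fin 8) (r : ℝ) (p : Oct) :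
    coord j (r • p) = r * coord j p := by fin_cases j <;> rfl

/-- The binary "dot product" `⟨i,j⟩ = i₁j₁ + i₂j₂ + i₃j₃` of binary digits. -/
def bdot (i j : Fin 8) : ℕ :=
  ((i.val.testBit 0 && j.val.testBit 0).toNat +
   (i.val.testBit 1 && j.val.testBit 1).toNat +
   (i.val.testBit 2 && j.val.testBit 2).toNat) % 2

/-- The involution `J_i`, the ℝ-linear map determined by `J_i(e_j) = (−1)^{⟨i,j⟩} e_j`. -/
def J (i : Fin 8) : Oct →ₗ[ℝ] Oct where
  toFun p := ∑ j : Fin 8, ((-1 : ℝ) ^ bdot i j * coord j p) • e j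
  map_add' p q := by
    simp only [coord_add, mul_add, add_smul]
    rw [Finset.sum_add_distrib]
  map_smul' r p := by
    simp only [coord_smul, RingHom.id_apply, Finset.smul_sum, smul_smul, mul_left_comm]

/-- The sign `σ(j,i)` defined by `J_j(conj e_i) = (−1)^{σ(j,i)} e_i`. -/
def sigma (j i : Fin 8) : ℕ := if i = 0 then 0 else (bdot j i + 1) % 2

end Oct
namespace Oct

@[simp] lemma e_0 : e 0 = mk 1 0 := rfl
@[simp] lemma e_1 : e 1 = mk ⟨0, 1, 0, 0⟩ 0 := rfl
@[simp] lemma e_2 : e 2 = mk ⟨0, 0, 1, 0⟩ 0 := rfl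
@[simp] lemma e_3 : e 3 = mk ⟨0, 0, 0, 1⟩ 0 := rfl
@[simp] lemma e_4 : e 4 = mk 0 1 := rfl
@[simp] lemma e_5 : e 5 = mk 0 ⟨0, 1, 0, 0⟩ := rfl
@[simp] lemma e_6 : e 6 = mk 0 ⟨0, 0, 1, 0⟩ := rfl
@[simp] lemma e_7 : e 7 = mk 0 ⟨0, 0, 0, 1⟩ := rfl

@[simp] lemma coord_0 (p : Oct) : coord 0 p = p.x.re := rfl
@[simp] lemma coord_1 (p : Oct) : coord 1 p = p.x.imI := rfl
@[simp] lemma coord_2 (p : Oct) : coord 2 p = p.x.imJ := rfl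
@[simp] lemma coord_3 (p : Oct) : coord 3 p = p.x.imK := rfl
@[simp] lemma coord_4 (p : Oct) : coord 4 p = p.y.re := rfl
@[simp] lemma coord_5 (p : Oct) : coord 5 p = p.y.imI := rfl
@[simp] lemma coord_6 (p : Oct) : coord 6 p = p.y.imJ := rfl
@[simp] lemma coord_7 (p : Oct) : coord 7 p = p.y.imK := rfl

lemma coord_e (l m : Fin 8) : coord l (e m) = if l = m then 1 else 0 := by
  fin_cases l <;> fin_cases m <;> rfl

lemma sum_coord_smul_e (p : Oct) : ∑ l : Fin 8, coord l p • e l = p := by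
  have hc : ∀ c : Fin 8, coord c (∑ l : Fin 8, coord l p • e l) = coord c p := by
    intro c
    simp only [Fin.sum_univ_eight, coord_add, coord_smul, coord_e]
    fin_cases c <;> simp
  refine ext ?_ ?_ <;> ext
  exacts [hc 0, hc 1, hc 2, hc 3, hc 4, hc 5, hc 6, hc 7]

end Oct

/-- The ℝ-linear isomorphism `Φ : ℝ⁸ → 𝕆` with `Φ(b_l) = e_l`. -/
def Phi : EuclideanSpace ℝ (Fin 8) ≃ₗ[ℝ] Oct where
  toFun v := ∑ l : Fin 8, v l • Oct.e l
  map_add' u v := by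
    simp only [PiLp.add_apply, add_smul]
    rw [Finset.sum_add_distrib]
  map_smul' r v := by
    simp only [PiLp.smul_apply, smul_eq_mul, RingHom.id_apply, Finset.smul_sum, smul_smul]
  invFun p := (WithLp.toLp 2 (fun l => Oct.coord l p) : EuclideanSpace ℝ (Fin 8))
  left_inv v := by
    ext l
    fin_cases l <;>
      simp only [Fin.sum_univ_eight, Oct.coord_add, Oct.coord_smul, Oct.coord_e] <;> simp
  right_inv p := Oct.sum_coord_smul_e p

/-- The quadratic form `Q(v) = −‖v‖²` on ℝ⁸. -/
def Q8 : QuadraticForm ℝ (EuclideanSpace ℝ (Fin 8)) :=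
  - LinearMap.BilinMap.toQuadraticMap
      (innerₗ (EuclideanSpace ℝ (Fin 8)) : LinearMap.BilinForm ℝ (EuclideanSpace ℝ (Fin 8)))

/-- The Clifford algebra `Cl₈` of `Q(v) = −‖v‖²` on ℝ⁸. -/
abbrev Cl8 := CliffordAlgebra Q8

/-- The Clifford generators `g_l := ι(b_l)`. -/
def g (l : Fin 8) : Cl8 := CliffordAlgebra.ι Q8 (EuclideanSpace.single l 1)

/-- The extension `J_j ⊗ id` of `J_j` to `𝕆 ⊗ Cl₈`. -/
def JT (j : Fin 8) : Oct ⊗[ℝ] Cl8 →ₗ[ℝ] Oct ⊗[ℝ] Cl8 :=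
  TensorProduct.map (Oct.J j) LinearMap.id

/-- The element `Ω := Σᵢ conj(eᵢ) ⊗ gᵢ` of `𝕆 ⊗ Cl₈`. -/
def Omega : Oct ⊗[ℝ] Cl8 := ∑ i : Fin 8, (Oct.e i).conj ⊗ₜ[ℝ] g i

/-- The octonionic Witt basis `f_j := (J_j ⊗ id)(Ω)`. -/
def f (j : Fin 8) : Oct ⊗[ℝ] Cl8 := JT j Omega

/-- The twistor vectors `X_i := Φ⁻¹(Φ(X)·conj(e_i))`. -/
def Xtw (X : EuclideanSpace ℝ (Fin 8)) (i : Fin 8) : EuclideanSpace ℝ (Fin 8) :=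
  Phi.symm (Phi X * (Oct.e i).conj)

/-- The Hermitian variables `Z_j := (J_j ⊗ id)(Ω·(Φ(X) ⊗ 1))`. -/
def Z (X : EuclideanSpace ℝ (Fin 8)) (j : Fin 8) : Oct ⊗[ℝ] Cl8 :=
  JT j (Omega * (Phi X ⊗ₜ[ℝ] (1 : Cl8)))


open scoped RealInnerProductSpace

/-! The Cayley–Dickson norm `|(a,b)|² = |a|² + |b|²` is multiplicative, so under `Φ` left
multiplication by `Φ(X)` scales Euclidean norms by `‖X‖`, hence (polarization) inner products by
`‖X‖²`. Conjugation is an isometry, so the `conj(eᵢ)` are orthonormal and the twistor vectors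
`Xᵢ = Φ⁻¹(Φ(X)·conj(eᵢ))` are orthogonal of length `‖X‖`, a basis when `X ≠ 0`. Any spanning set
of `ℝ⁸` generates `Cl₈`, since `ι(ℝ⁸)` does. -/

theorem real_inner_map_map_of_norm_map_eq_mul {E F : Type*} [NormedAddCommGroup E]
    [InnerProductSpace ℝ E] [NormedAddCommGroup F] [InnerProductSpace ℝ F] (T : E →ₗ[ℝ] F)
    (c : ℝ) (hT : ∀ v, ‖T v‖ = c * ‖v‖) (u v : E) : ⟪T u, T v⟫ = c ^ 2 * ⟪u, v⟫ := by
  rw [real_inner_eq_norm_add_mul_self_sub_norm_mul_self_sub_norm_mul_self_div_two, ← map_add,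
    hT, hT, hT, real_inner_eq_norm_add_mul_self_sub_norm_mul_self_sub_norm_mul_self_div_two u v]
  ring

theorem CliffordAlgebra.adjoin_ι_image_eq_top {R M : Type*} [CommRing R] [AddCommGroup M]
    [Module R M] (Q : QuadraticForm R M) {s : Set M} (hs : Submodule.span R s = ⊤) :
    Algebra.adjoin R (CliffordAlgebra.ι Q '' s) = ⊤ := by
  refine eq_top_iff.2 (CliffordAlgebra.adjoin_range_ι (Q := Q) ▸ Algebra.adjoin_le ?_)
  rintro _ ⟨v, rfl⟩
  exact Algebra.span_le_adjoin R _
    (Submodule.apply_mem_span_image_of_mem_span _ (hs ▸ Submodule.mem_top))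

namespace Oct

def normSq (p : Oct) : ℝ := Quaternion.normSq p.x + Quaternion.normSq p.y

theorem normSq_mul (p q : Oct) : normSq (p * q) = normSq p * normSq q := by
  simp only [normSq, x_mul, y_mul, Quaternion.normSq_def', Quaternion.re_sub, Quaternion.imI_sub,
    Quaternion.imJ_sub, Quaternion.imK_sub, Quaternion.re_add, Quaternion.imI_add,
    Quaternion.imJ_add, Quaternion.imK_add, Quaternion.re_mul, Quaternion.imI_mul,
    Quaternion.imJ_mul, Quaternion.imK_mul, Quaternion.re_star, Quaternion.imI_star,
    Quaternion.imJ_star, Quaternion.imK_star]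
  ring

def conjLinear : Oct →ₗ[ℝ] Oct where
  toFun := conj
  map_add' p q := by ext <;> simp [conj, add_comm]
  map_smul' r p := by ext <;> simp [conj]

@[simp] theorem conjLinear_apply (p : Oct) : conjLinear p = p.conj := rfl

theorem normSq_conj (p : Oct) : normSq p.conj = normSq p := by
  simp [normSq, conj]

end Oct

theorem Phi_symm_apply (p : Oct) (l : Fin 8) : Phi.symm p l = Oct.coord l p := rfl

theorem norm_Phi_symm_sq (p : Oct) : ‖Phi.symm p‖ ^ 2 = p.normSq := by
  simp only [EuclideanSpace.real_norm_sq_eq, Fin.sum_univ_eight, Phi_symm_apply, Oct.coord_0,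
    Oct.coord_1, Oct.coord_2, Oct.coord_3, Oct.coord_4, Oct.coord_5, Oct.coord_6, Oct.coord_7,
    Oct.normSq, Quaternion.normSq_def']
  ring

theorem norm_Phi_symm_mul (p q : Oct) : ‖Phi.symm (p * q)‖ = ‖Phi.symm p‖ * ‖Phi.symm q‖ := by
  rw [← sq_eq_sq₀ (norm_nonneg _) (by positivity), mul_pow, norm_Phi_symm_sq, norm_Phi_symm_sq,
    norm_Phi_symm_sq, Oct.normSq_mul]

theorem Phi_single (i : Fin 8) : Phi (EuclideanSpace.single i 1) = Oct.e i := by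
  simp [Phi]

def leftMul (X : EuclideanSpace ℝ (Fin 8)) :
    EuclideanSpace ℝ (Fin 8) →ₗ[ℝ] EuclideanSpace ℝ (Fin 8) :=
  Phi.symm.toLinearMap ∘ₗ LinearMap.mulLeft ℝ (Phi X) ∘ₗ Phi.toLinearMap

theorem norm_leftMul (X v : EuclideanSpace ℝ (Fin 8)) : ‖leftMul X v‖ = ‖X‖ * ‖v‖ := by
  simp [leftMul, norm_Phi_symm_mul]

def conjIsometry : EuclideanSpace ℝ (Fin 8) →ₗᵢ[ℝ] EuclideanSpace ℝ (Fin 8) :=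
  { Phi.symm.toLinearMap ∘ₗ Oct.conjLinear ∘ₗ Phi.toLinearMap with
    norm_map' := fun v => by
      rw [← sq_eq_sq₀ (norm_nonneg _) (norm_nonneg _)]
      change ‖Phi.symm (Phi v).conj‖ ^ 2 = _
      rw [norm_Phi_symm_sq, Oct.normSq_conj, ← norm_Phi_symm_sq, Phi.symm_apply_apply] }

theorem orthonormal_conjIsometry_single :
    Orthonormal ℝ fun i : Fin 8 => conjIsometry (EuclideanSpace.single i 1) :=
  EuclideanSpace.orthonormal_single.comp_linearIsometry conjIsometry

theorem Xtw_eq_leftMul (X : EuclideanSpace ℝ (Fin 8)) (i : Fin 8) :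
    Xtw X i = leftMul X (conjIsometry (EuclideanSpace.single i 1)) := by
  simp [Xtw, leftMul, conjIsometry, Phi_single]

theorem inner_Xtw (X : EuclideanSpace ℝ (Fin 8)) (i j : Fin 8) :
    ⟪Xtw X i, Xtw X j⟫ = if i = j then ‖X‖ ^ 2 else 0 := by
  rw [Xtw_eq_leftMul, Xtw_eq_leftMul,
    real_inner_map_map_of_norm_map_eq_mul _ _ (norm_leftMul X),
    orthonormal_iff_ite.1 orthonormal_conjIsometry_single]
  split_ifs <;> simp

theorem linearIndependent_Xtw (X : EuclideanSpace ℝ (Fin 8)) (hX : X ≠ 0) :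
    LinearIndependent ℝ (Xtw X) := by
  have hker : LinearMap.ker (leftMul X) = ⊥ := LinearMap.ker_eq_bot'.2 fun v hv => by
    simpa [hv, hX] using (norm_leftMul X v).symm
  exact funext (Xtw_eq_leftMul X) ▸ orthonormal_conjIsometry_single.linearIndependent.map' _ hker

/-- If `X ≠ 0`, the twistor vectors `X₀, …, X₇` form an orthogonal basis
of `ℝ⁸` (pairwise orthogonal, linearly independent and spanning), and the `ι(Xᵢ)` generate
`Cl₈` as an `ℝ`-algebra. -/
theorem twistor_orthogonal_basis_and_generators (X : EuclideanSpace ℝ (Fin 8)) (hX : X ≠ 0) :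
    (∀ i j : Fin 8, i ≠ j → ⟪Xtw X i, Xtw X j⟫ = 0) ∧
    LinearIndependent ℝ (Xtw X) ∧
    Submodule.span ℝ (Set.range (Xtw X)) = ⊤ ∧
    Algebra.adjoin ℝ (Set.range fun i : Fin 8 => CliffordAlgebra.ι Q8 (Xtw X i)) = ⊤ := by
  have hli := linearIndependent_Xtw X hX
  have hspan : Submodule.span ℝ (Set.range (Xtw X)) = ⊤ :=
    hli.span_eq_top_of_card_eq_finrank (by simp)
  refine ⟨fun i j hij => by simp [inner_Xtw, hij], hli, hspan, ?_⟩
  rw [Set.range_comp']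
  exact CliffordAlgebra.adjoin_ι_image_eq_top Q8 hspan
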